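/- Let G=(V,E) be a finite simple undirected graph, u,v adjacent, n = |N(u)∩N(v)|. If ⌈n/2⌉ + 1 > (1/2)·max(deg(u),deg(v)), then for every cut (S,S̄) with u ∈ S and v ∈ S̄, there exists a cut obtained by moving either u or v across the cut that has strictly fewer cross edges. (Hence {u,v} crosses no cut minimizing the number of cross edges subject to the cut being nontrivial, i.e., {u,v} is not a cross-cutting edge when minimum cuts are determined by cross-edge count.) -/

import Mathlib

/-!
Moving a vertex `a` across the cut turns its crossing edges into non-crossing ones and vice
versa, so it lowers the cut size exactly when more than half of the neighbours of `a` lie on the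
other side. For the edge `uv` with `u ∈ S`, `v ∉ S`, the vertex `v` and the common neighbours
outside `S` are neighbours of `u` across the cut, while `u` and the common neighbours inside `S`
are neighbours of `v` across the cut. One of the two groups of common neighbours has at least
`⌈n/2⌉` elements, and the hypothesis makes the corresponding vertex worth moving.
-/

open Finset

variable {V : Type*}

/-- Number of edges crossing the cut `(S, Sᶜ)`. -/
def cutSize [Fintype V] [DecidableEq V] (G : SimpleGraph V) [DecidableRel G.Adj]
    (S : Finset V) : ℕ :=
  (Finset.univ.filter (fun p : V × V => G.Adj p.1 p.2 ∧ p.1 ∈ S ∧ p.2 ∉ S)).card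

namespace SimpleGraph

variable (G : SimpleGraph V) [DecidableRel G.Adj]

theorem card_interedges_comm (s t : Finset V) : #(G.interedges s t) = #(G.interedges t s) :=
  have := G.symm
  Rel.card_interedges_comm s t

variable [Fintype V] [DecidableEq V]

theorem card_interedges_eq_sum (s t : Finset V) :
    #(G.interedges s t) = ∑ x ∈ s, #(G.neighborFinset x ∩ t) := by
  rw [interedges_def, card_filter, sum_product]
  refine sum_congr rfl fun x _ => ?_
  rw [← card_filter]
  congr 1
  ext y
  simp [and_comm]

theorem card_interedges_insert_left {a : V} {s : Finset V} (ha : a ∉ s) (t : Finset V) :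
    #(G.interedges (insert a s) t) = #(G.interedges s t) + #(G.neighborFinset a ∩ t) := by
  rw [card_interedges_eq_sum, card_interedges_eq_sum, sum_insert ha, add_comm]

theorem card_interedges_insert_right (s : Finset V) {a : V} {t : Finset V} (ha : a ∉ t) :
    #(G.interedges s (insert a t)) = #(G.interedges s t) + #(G.neighborFinset a ∩ s) := by
  rw [card_interedges_comm, card_interedges_insert_left G ha, card_interedges_comm]

theorem card_commonNeighbors_sdiff_lt {u v : V} (huv : G.Adj u v) {T : Finset V} (hv : v ∉ T) :
    #((G.neighborFinset u ∩ G.neighborFinset v) \ T) < #(G.neighborFinset u \ T) := by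
  refine card_lt_card <| (ssubset_iff_of_subset (sdiff_subset_sdiff inter_subset_left le_rfl)).2 ?_
  exact ⟨v, mem_sdiff.2 ⟨(G.mem_neighborFinset u v).2 huv, hv⟩,
    fun h => G.notMem_neighborFinset_self v (mem_inter.1 (mem_sdiff.1 h).1).2⟩

end SimpleGraph

section Cut

variable [Fintype V] [DecidableEq V] (G : SimpleGraph V) [DecidableRel G.Adj]

theorem cutSize_eq_card_interedges (S : Finset V) : cutSize G S = #(G.interedges S Sᶜ) := by
  unfold cutSize
  congr 1
  ext ⟨x, y⟩
  simp only [mem_filter, mem_univ, true_and, SimpleGraph.mem_interedges_iff, mem_compl]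
  tauto

theorem cutSize_insert_add {a : V} {S : Finset V} (ha : a ∉ S) :
    cutSize G (insert a S) + #(G.neighborFinset a ∩ S) =
      cutSize G S + #(G.neighborFinset a \ S) := by
  have hnbr : G.neighborFinset a ∩ Sᶜ.erase a = G.neighborFinset a \ S := by
    rw [inter_erase, erase_eq_of_notMem fun h => G.notMem_neighborFinset_self a (mem_inter.1 h).1,
      sdiff_eq_inter_compl]
  rw [cutSize_eq_card_interedges, cutSize_eq_card_interedges, compl_insert]
  conv_rhs => rw [← insert_erase (mem_compl.2 ha)]
  rw [G.card_interedges_insert_left ha, G.card_interedges_insert_right _ (notMem_erase a _), hnbr]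
  omega

theorem cutSize_erase_add {a : V} {S : Finset V} (ha : a ∈ S) :
    cutSize G (S.erase a) + #(G.neighborFinset a \ S) =
      cutSize G S + #(G.neighborFinset a ∩ S) := by
  have hself := G.notMem_neighborFinset_self a
  have hsdiff : G.neighborFinset a \ S.erase a = G.neighborFinset a \ S := by
    rw [← sdiff_insert_of_notMem hself, insert_erase ha]
  have h := cutSize_insert_add G (notMem_erase a S)
  rw [insert_erase ha, inter_erase, erase_eq_of_notMem fun h => hself (mem_inter.1 h).1,
    hsdiff] at h
  omega

theorem cutSize_erase_lt {a : V} {S : Finset V} (ha : a ∈ S)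
    (h : G.degree a < 2 * #(G.neighborFinset a \ S)) : cutSize G (S.erase a) < cutSize G S := by
  have hdeg := card_inter_add_card_sdiff (G.neighborFinset a) S
  rw [G.card_neighborFinset_eq_degree] at hdeg
  have := cutSize_erase_add G ha
  omega

theorem cutSize_insert_lt {a : V} {S : Finset V} (ha : a ∉ S)
    (h : G.degree a < 2 * #(G.neighborFinset a ∩ S)) : cutSize G (insert a S) < cutSize G S := by
  have hdeg := card_inter_add_card_sdiff (G.neighborFinset a) S
  rw [G.card_neighborFinset_eq_degree] at hdeg
  have := cutSize_insert_add G ha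
  omega

end Cut

theorem lt_two_mul_add_two_of_half_lt_ceil_half_add_one {n m d : ℕ} (hm : n ≤ 2 * m)
    (hd : (d : ℚ) / 2 < ⌈(n : ℚ) / 2⌉ + 1) : d < 2 * m + 2 := by
  have hceil : ⌈(n : ℚ) / 2⌉ ≤ m := Int.ceil_le.2 <| by
    rw [div_le_iff₀ two_pos]
    exact_mod_cast (by omega : n ≤ m * 2)
  have hceil' : ((⌈(n : ℚ) / 2⌉ : ℤ) : ℚ) ≤ m := by exact_mod_cast hceil
  have : (d : ℚ) < 2 * m + 2 := by linarith
  exact_mod_cast this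

theorem edge_removal_criterion
    [Fintype V] [DecidableEq V] (G : SimpleGraph V) [DecidableRel G.Adj]
    (u v : V) (huv : G.Adj u v)
    (n : ℕ) (hn : n = (G.neighborFinset u ∩ G.neighborFinset v).card)
    (hcrit : (⌈(n : ℚ) / 2⌉ : ℚ) + 1 > (max (G.degree u) (G.degree v) : ℚ) / 2) :
    ∀ S : Finset V, u ∈ S → v ∉ S →
      cutSize G (S.erase u) < cutSize G S ∨ cutSize G (insert v S) < cutSize G S := by
  intro S hu hv
  set C := G.neighborFinset u ∩ G.neighborFinset v
  have hsplit : #(C \ S) + #(C ∩ S) = n := hn ▸ card_sdiff_add_card_inter C S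
  have hnu : #(C \ S) < #(G.neighborFinset u \ S) := G.card_commonNeighbors_sdiff_lt huv hv
  have hnv : #(C ∩ S) < #(G.neighborFinset v ∩ S) := by
    have h := G.card_commonNeighbors_sdiff_lt huv.symm (notMem_compl.2 hu)
    rwa [sdiff_compl, sdiff_compl, inf_eq_inter, inf_eq_inter,
      inter_comm (G.neighborFinset v)] at h
  have hmax : max (G.degree u) (G.degree v) < 2 * max #(C \ S) #(C ∩ S) + 2 :=
    lt_two_mul_add_two_of_half_lt_ceil_half_add_one (n := n) (by omega) (by exact_mod_cast hcrit)
  rcases le_total #(C ∩ S) #(C \ S) with h | h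
  · exact .inl <| cutSize_erase_lt G hu (by omega)
  · exact .inr <| cutSize_insert_lt G hv (by omega)
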